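/- On D, the reduced Raychaudhuri equations of Kerr–Newman hold: e₄(trX) + ½ (trX)² = 0 and e₃(tr X̲) + 2 ω̲ · tr X̲ + ½ (tr X̲)² = 0, where trX := 2/q, tr X̲ := −2Δ/(q q̄²), and ω̲ := (a² cos²θ (r−M) + Mr² − a²r − Q²r)/|q|⁴. (The second identity is the conformally weighted equation ∇₃^(c) tr X̲ + ½(tr X̲)² = 0, since tr X̲ has conformal type −1 and the Kerr–Newman frame has ω = 0.) -/

import Mathlib

/-!
Both `trX = 2/q` and `tr X̲ = −2Δ/(q q̄²)` depend on `r` and `θ` only, so `e₄` acts on them as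
`∂_r` and `e₃` as `−(Δ/|q|²) ∂_r`. Since `∂_r q = ∂_r q̄ = 1`, we get `e₄(2/q) = −2/q² = −½ (trX)²`,
and the second equation becomes a rational identity in `q`, `q̄` and `Δ` once `|q|² = q q̄` and
`2r = q + q̄` are substituted.
-/

noncomputable section

namespace KerrNewman

/-- A point `x = (t, r, θ, φ)` of the coordinate domain, with indices `0,1,2,3`. -/
abbrev Pt : Type := Fin 4 → ℝ

/-- Partial derivative `∂_μ` of a complex-valued function on `ℝ⁴`. -/
def pdC (μ : Fin 4) (f : Pt → ℂ) (x : Pt) : ℂ := fderiv ℝ f x (Pi.single μ 1)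

/-- Partial derivative `∂_μ` of a real-valued function on `ℝ⁴`. -/
def pdR (μ : Fin 4) (f : Pt → ℝ) (x : Pt) : ℝ := fderiv ℝ f x (Pi.single μ 1)

/-- `Δ = r² − 2Mr + a² + Q²`. -/
def Del (M a Q : ℝ) (x : Pt) : ℝ := x 1 ^ 2 - 2 * M * x 1 + a ^ 2 + Q ^ 2

/-- `|q|² = r² + a² cos²θ`. -/
def q2 (a : ℝ) (x : Pt) : ℝ := x 1 ^ 2 + a ^ 2 * Real.cos (x 2) ^ 2

/-- `q = r + i a cos θ`. -/
def qC (a : ℝ) (x : Pt) : ℂ := (x 1 : ℂ) + Complex.I * (a : ℂ) * (Real.cos (x 2) : ℂ)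

/-- `q̄ = r − i a cos θ`. -/
def qbarC (a : ℝ) (x : Pt) : ℂ := (x 1 : ℂ) - Complex.I * (a : ℂ) * (Real.cos (x 2) : ℂ)

/-- `e₄ = ((r²+a²)/Δ)∂_t + ∂_r + (a/Δ)∂_φ` as an operator on complex functions. -/
def e4 (M a Q : ℝ) (f : Pt → ℂ) (x : Pt) : ℂ :=
  (((x 1 ^ 2 + a ^ 2) / Del M a Q x : ℝ) : ℂ) * pdC 0 f x + pdC 1 f x
    + ((a / Del M a Q x : ℝ) : ℂ) * pdC 3 f x

/-- `e₃ = ((r²+a²)/|q|²)∂_t − (Δ/|q|²)∂_r + (a/|q|²)∂_φ` as an operator on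
complex functions. -/
def e3 (M a Q : ℝ) (f : Pt → ℂ) (x : Pt) : ℂ :=
  (((x 1 ^ 2 + a ^ 2) / q2 a x : ℝ) : ℂ) * pdC 0 f x
    - ((Del M a Q x / q2 a x : ℝ) : ℂ) * pdC 1 f x
    + ((a / q2 a x : ℝ) : ℂ) * pdC 3 f x

/-- `e₁ = (1/√(|q|²))∂_θ` as an operator on complex functions. -/
def e1 (a : ℝ) (f : Pt → ℂ) (x : Pt) : ℂ :=
  ((1 / Real.sqrt (q2 a x) : ℝ) : ℂ) * pdC 2 f x

/-- `e₂ = (a sinθ/√(|q|²))∂_t + (1/(√(|q|²) sinθ))∂_φ` as an operator on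
complex functions. -/
def e2 (a : ℝ) (f : Pt → ℂ) (x : Pt) : ℂ :=
  ((a * Real.sin (x 2) / Real.sqrt (q2 a x) : ℝ) : ℂ) * pdC 0 f x
    + ((1 / (Real.sqrt (q2 a x) * Real.sin (x 2)) : ℝ) : ℂ) * pdC 3 f x

/-- `e₄` as an operator on real-valued functions. -/
def e4R (M a Q : ℝ) (f : Pt → ℝ) (x : Pt) : ℝ :=
  ((x 1 ^ 2 + a ^ 2) / Del M a Q x) * pdR 0 f x + pdR 1 f x
    + (a / Del M a Q x) * pdR 3 f x

/-- `trX = 2/q`. -/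
def trX (a : ℝ) (x : Pt) : ℂ := 2 / qC a x

/-- `tr X̲ = −2Δ/(q q̄²)`. -/
def trXb (M a Q : ℝ) (x : Pt) : ℂ :=
  -2 * ((Del M a Q x : ℝ) : ℂ) / (qC a x * qbarC a x ^ 2)

/-- `H₁ = i a sinθ · q / |q|³`. -/
def H1 (a : ℝ) (x : Pt) : ℂ :=
  Complex.I * (a : ℂ) * (Real.sin (x 2) : ℂ) * qC a x
    / ((Real.sqrt (q2 a x) ^ 3 : ℝ) : ℂ)

/-- `H̲₁ = −i a sinθ · q̄ / |q|³`. -/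
def Hb1 (a : ℝ) (x : Pt) : ℂ :=
  -(Complex.I * (a : ℂ) * (Real.sin (x 2) : ℂ) * qbarC a x
    / ((Real.sqrt (q2 a x) ^ 3 : ℝ) : ℂ))

/-- `Z₁ = i a sinθ · q̄ / |q|³`. -/
def Z1 (a : ℝ) (x : Pt) : ℂ :=
  Complex.I * (a : ℂ) * (Real.sin (x 2) : ℂ) * qbarC a x
    / ((Real.sqrt (q2 a x) ^ 3 : ℝ) : ℂ)

/-- `P^F = Q/q̄²`. -/
def PF (a Q : ℝ) (x : Pt) : ℂ := (Q : ℂ) / qbarC a x ^ 2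

/-- `P = −2M/q³ + 2Q²/(q³ q̄)`. -/
def Pc (M a Q : ℝ) (x : Pt) : ℂ :=
  -2 * (M : ℂ) / qC a x ^ 3 + 2 * (Q : ℂ) ^ 2 / (qC a x ^ 3 * qbarC a x)

/-- `ω̲ = (a² cos²θ (r−M) + Mr² − a²r − Q²r)/|q|⁴`. -/
def omb (M a Q : ℝ) (x : Pt) : ℝ :=
  (a ^ 2 * Real.cos (x 2) ^ 2 * (x 1 - M) + M * x 1 ^ 2 - a ^ 2 * x 1 - Q ^ 2 * x 1)
    / q2 a x ^ 2

/-- `trχ̲ = −2rΔ/|q|⁴`. -/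
def trchib (M a Q : ℝ) (x : Pt) : ℝ := -(2 * x 1 * Del M a Q x) / q2 a x ^ 2

/-- `atrχ̲ = 2aΔ cosθ/|q|⁴`. -/
def atrchib (M a Q : ℝ) (x : Pt) : ℝ :=
  2 * a * Del M a Q x * Real.cos (x 2) / q2 a x ^ 2

/-- `atrχ = 2a cosθ/|q|²`. -/
def atrchi (a : ℝ) (x : Pt) : ℝ := 2 * a * Real.cos (x 2) / q2 a x

/-- `η₁ = −a² sinθ cosθ/|q|³`. -/
def eta1 (a : ℝ) (x : Pt) : ℝ :=
  -(a ^ 2 * Real.sin (x 2) * Real.cos (x 2)) / Real.sqrt (q2 a x) ^ 3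

/-- `η₂ = a r sinθ/|q|³`. -/
def eta2 (a : ℝ) (x : Pt) : ℝ := a * x 1 * Real.sin (x 2) / Real.sqrt (q2 a x) ^ 3

/-- `η̲₁ = −a² sinθ cosθ/|q|³`. -/
def etab1 (a : ℝ) (x : Pt) : ℝ :=
  -(a ^ 2 * Real.sin (x 2) * Real.cos (x 2)) / Real.sqrt (q2 a x) ^ 3

/-- `η̲₂ = −a r sinθ/|q|³`. -/
def etab2 (a : ℝ) (x : Pt) : ℝ := -(a * x 1 * Real.sin (x 2)) / Real.sqrt (q2 a x) ^ 3

/-- `*η₁ = a r sinθ/|q|³`. -/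
def seta1 (a : ℝ) (x : Pt) : ℝ := a * x 1 * Real.sin (x 2) / Real.sqrt (q2 a x) ^ 3

/-- `*η₂ = a² sinθ cosθ/|q|³`. -/
def seta2 (a : ℝ) (x : Pt) : ℝ :=
  a ^ 2 * Real.sin (x 2) * Real.cos (x 2) / Real.sqrt (q2 a x) ^ 3

/-- `*η̲₁ = −a r sinθ/|q|³`. -/
def setab1 (a : ℝ) (x : Pt) : ℝ := -(a * x 1 * Real.sin (x 2)) / Real.sqrt (q2 a x) ^ 3

/-- `*η̲₂ = a² sinθ cosθ/|q|³`. -/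
def setab2 (a : ℝ) (x : Pt) : ℝ :=
  a ^ 2 * Real.sin (x 2) * Real.cos (x 2) / Real.sqrt (q2 a x) ^ 3

/-- `ρ = (−2Mr³ + 2Q²r² + 6Ma²r cos²θ − 2Q²a² cos²θ)/|q|⁶`. -/
def rho (M a Q : ℝ) (x : Pt) : ℝ :=
  (-2 * M * x 1 ^ 3 + 2 * Q ^ 2 * x 1 ^ 2 + 6 * M * a ^ 2 * x 1 * Real.cos (x 2) ^ 2
      - 2 * Q ^ 2 * a ^ 2 * Real.cos (x 2) ^ 2) / q2 a x ^ 3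

/-- `tr X̲ = trχ̲ − i atrχ̲` (component form). -/
def trXbC (M a Q : ℝ) (x : Pt) : ℂ :=
  ((trchib M a Q x : ℝ) : ℂ) - Complex.I * ((atrchib M a Q x : ℝ) : ℂ)

/-- `C = c·trχ̲ + i p·atrχ̲`. -/
def Cfun (M a Q c p : ℝ) (x : Pt) : ℂ :=
  ((c * trchib M a Q x : ℝ) : ℂ) + Complex.I * ((p : ℝ) : ℂ) * ((atrchib M a Q x : ℝ) : ℂ)


open Function

theorem fderiv_apply_single_eq_deriv_update {ι E : Type*} [Fintype ι] [DecidableEq ι]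
    [NormedAddCommGroup E] [NormedSpace ℝ E] {f : (ι → ℝ) → E} {x : ι → ℝ}
    (hf : DifferentiableAt ℝ f x) (i : ι) :
    fderiv ℝ f x (Pi.single i 1) = deriv (fun s => f (update x i s)) (x i) := by
  rw [← update_eq_self i x] at hf
  have h := hf.hasFDerivAt.comp_hasDerivAt (x i) (hasDerivAt_update x i (x i))
  rw [update_eq_self] at h
  exact h.deriv.symm

theorem pdC_eq_of_hasDerivAt {f : Pt → ℂ} {x : Pt} {μ : Fin 4} {d : ℂ}
    (hf : DifferentiableAt ℝ f x) (hd : HasDerivAt (fun s => f (update x μ s)) d (x μ)) :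
    pdC μ f x = d := by
  rw [pdC, fderiv_apply_single_eq_deriv_update hf, hd.deriv]

theorem pdC_eq_zero_of_update_eq {f : Pt → ℂ} {x : Pt} {μ : Fin 4}
    (h : ∀ s, f (update x μ s) = f x) : pdC μ f x = 0 := by
  by_cases hf : DifferentiableAt ℝ f x
  · rw [pdC, fderiv_apply_single_eq_deriv_update hf]
    simp only [h, deriv_const]
  · simp [pdC, fderiv_zero_of_not_differentiableAt hf]

theorem e4_eq_pdC_one {M a Q : ℝ} {f : Pt → ℂ} {x : Pt}
    (ht : ∀ s, f (update x 0 s) = f x) (hφ : ∀ s, f (update x 3 s) = f x) :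
    e4 M a Q f x = pdC 1 f x := by
  rw [e4, pdC_eq_zero_of_update_eq ht, pdC_eq_zero_of_update_eq hφ]
  ring

theorem e3_eq_pdC_one {M a Q : ℝ} {f : Pt → ℂ} {x : Pt}
    (ht : ∀ s, f (update x 0 s) = f x) (hφ : ∀ s, f (update x 3 s) = f x) :
    e3 M a Q f x = -((Del M a Q x / q2 a x : ℝ) : ℂ) * pdC 1 f x := by
  rw [e3, pdC_eq_zero_of_update_eq ht, pdC_eq_zero_of_update_eq hφ]
  ring

section

variable {M a Q : ℝ} {x : Pt}

theorem qC_ne_zero (hr : x 1 ≠ 0) : qC a x ≠ 0 := fun h => hr <| by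
  simpa [qC] using congrArg Complex.re h

theorem qbarC_ne_zero (hr : x 1 ≠ 0) : qbarC a x ≠ 0 := fun h => hr <| by
  simpa [qbarC] using congrArg Complex.re h

theorem qC_add_qbarC : qC a x + qbarC a x = 2 * (x 1 : ℂ) := by
  rw [qC, qbarC]
  ring

theorem ofReal_q2 : (q2 a x : ℂ) = qC a x * qbarC a x := by
  rw [q2, qC, qbarC]
  simp only [Complex.ofReal_add, Complex.ofReal_mul, Complex.ofReal_pow]
  linear_combination (a : ℂ) ^ 2 * (Real.cos (x 2) : ℂ) ^ 2 * Complex.I_sq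

theorem omb_eq : omb M a Q x = ((x 1 - M) * q2 a x - x 1 * Del M a Q x) / q2 a x ^ 2 := by
  rw [omb, q2, Del]
  ring

theorem trX_update_of_ne {μ : Fin 4} (h1 : 1 ≠ μ) (h2 : 2 ≠ μ) (s : ℝ) :
    trX a (update x μ s) = trX a x := by
  simp only [trX, qC, update_of_ne h1, update_of_ne h2]

theorem trXb_update_of_ne {μ : Fin 4} (h1 : 1 ≠ μ) (h2 : 2 ≠ μ) (s : ℝ) :
    trXb M a Q (update x μ s) = trXb M a Q x := by
  simp only [trXb, Del, qC, qbarC, update_of_ne h1, update_of_ne h2]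

theorem differentiableAt_trX (hq : qC a x ≠ 0) : DifferentiableAt ℝ (trX a) x := by
  unfold trX qC at *
  fun_prop (disch := assumption)

theorem differentiableAt_trXb (hq : qC a x ≠ 0) (hqb : qbarC a x ≠ 0) :
    DifferentiableAt ℝ (trXb M a Q) x := by
  have hden : qC a x * qbarC a x ^ 2 ≠ 0 := mul_ne_zero hq (pow_ne_zero 2 hqb)
  unfold trXb Del qC qbarC at *
  simp only [div_eq_mul_inv]
  fun_prop (disch := assumption)

theorem hasDerivAt_qC_update_one :
    HasDerivAt (fun s => qC a (update x 1 s)) 1 (x 1) := by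
  simp only [qC, update_self, update_of_ne (by decide : (2 : Fin 4) ≠ 1)]
  simpa using (hasDerivAt_id (x 1)).ofReal_comp

theorem hasDerivAt_qbarC_update_one :
    HasDerivAt (fun s => qbarC a (update x 1 s)) 1 (x 1) := by
  simp only [qbarC, update_self, update_of_ne (by decide : (2 : Fin 4) ≠ 1)]
  simpa using (hasDerivAt_id (x 1)).ofReal_comp

theorem hasDerivAt_Del_update_one :
    HasDerivAt (fun s => (Del M a Q (update x 1 s) : ℂ)) (2 * x 1 - 2 * M) (x 1) := by
  have h : HasDerivAt (fun s : ℝ => s ^ 2 - 2 * M * s + a ^ 2 + Q ^ 2) (2 * x 1 - 2 * M) (x 1) :=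
    ((((hasDerivAt_pow 2 (x 1)).sub ((hasDerivAt_id (x 1)).const_mul (2 * M))).add_const
      (a ^ 2)).add_const (Q ^ 2)).congr_deriv (by simp)
  simp only [Del, update_self]
  exact_mod_cast h.ofReal_comp

theorem pdC_one_trX (hq : qC a x ≠ 0) : pdC 1 (trX a) x = -2 / qC a x ^ 2 := by
  refine pdC_eq_of_hasDerivAt (differentiableAt_trX hq) ?_
  have h := (hasDerivAt_const (x 1) (2 : ℂ)).fun_div hasDerivAt_qC_update_one
    (by rwa [update_eq_self])
  simp only [update_eq_self] at h
  exact h.congr_deriv (by ring)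

theorem pdC_one_trXb (hq : qC a x ≠ 0) (hqb : qbarC a x ≠ 0) :
    pdC 1 (trXb M a Q) x = -2 * ((2 * x 1 - 2 * M) * qC a x * qbarC a x
      - Del M a Q x * (qbarC a x + 2 * qC a x)) / (qC a x ^ 2 * qbarC a x ^ 3) := by
  refine pdC_eq_of_hasDerivAt (differentiableAt_trXb hq hqb) ?_
  have hden : qC a x * qbarC a x ^ 2 ≠ 0 := mul_ne_zero hq (pow_ne_zero 2 hqb)
  have h := ((hasDerivAt_Del_update_one (M := M) (a := a) (Q := Q)).const_mul (-2 : ℂ)).fun_div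
    (hasDerivAt_qC_update_one.fun_mul (hasDerivAt_qbarC_update_one.fun_pow 2))
    (by simpa only [update_eq_self] using hden)
  simp only [update_eq_self] at h
  exact h.congr_deriv (by field_simp; ring)

end

/-- With `q`, `b` standing for `q`, `q̄`, the three summands are `e₃(tr X̲)`, `2ω̲ tr X̲` and
`½ (tr X̲)²`. -/
theorem raychaudhuri_identity {K : Type*} [Field K] {M r D q b : K} (hq : q ≠ 0) (hb : b ≠ 0)
    (hr : q + b = 2 * r) :
    -(D / (q * b)) * (-2 * ((2 * r - 2 * M) * q * b - D * (b + 2 * q)) / (q ^ 2 * b ^ 3))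
      + 2 * (((r - M) * (q * b) - r * D) / (q * b) ^ 2) * (-2 * D / (q * b ^ 2))
      + 1 / 2 * (-2 * D / (q * b ^ 2)) ^ 2 = 0 := by
  field_simp
  linear_combination (-2 * D ^ 2) * hr

theorem raychaudhuri_general (M a Q : ℝ) (x : Pt)
    (hr : 0 < x 1) :
    e4 M a Q (trX a) x + (1 / 2) * trX a x ^ 2 = 0 ∧
    e3 M a Q (trXb M a Q) x + 2 * ((omb M a Q x : ℝ) : ℂ) * trXb M a Q x
        + (1 / 2) * trXb M a Q x ^ 2 = 0 := by
  have hq : qC a x ≠ 0 := qC_ne_zero hr.ne'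
  have hqb : qbarC a x ≠ 0 := qbarC_ne_zero hr.ne'
  constructor
  · rw [e4_eq_pdC_one (trX_update_of_ne (by decide) (by decide))
      (trX_update_of_ne (by decide) (by decide)), pdC_one_trX hq, trX]
    field_simp
    ring
  · rw [e3_eq_pdC_one (trXb_update_of_ne (by decide) (by decide))
      (trXb_update_of_ne (by decide) (by decide)), pdC_one_trXb hq hqb, omb_eq, trXb]
    push_cast
    rw [ofReal_q2]
    exact raychaudhuri_identity hq hqb qC_add_qbarC

/-- on `D`, the reduced Raychaudhuri equations of Kerr–Newman hold:
`e₄(trX) + ½(trX)² = 0` and `e₃(tr X̲) + 2ω̲·tr X̲ + ½(tr X̲)² = 0`. -/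
theorem raychaudhuri (M a Q : ℝ) (x : Pt)
    (hr : 0 < x 1) (hθ₀ : 0 < x 2) (hθπ : x 2 < Real.pi)
    (hΔ : Del M a Q x ≠ 0) :
    e4 M a Q (trX a) x + (1 / 2) * trX a x ^ 2 = 0 ∧
    e3 M a Q (trXb M a Q) x + 2 * ((omb M a Q x : ℝ) : ℂ) * trXb M a Q x
        + (1 / 2) * trXb M a Q x ^ 2 = 0 :=
  raychaudhuri_general M a Q x hr

end KerrNewman
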